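/- For every d ∈ {1,2,3} there exists a constant C > 0 such that for all κ > 0, all x, y ∈ ℝ^d and all t > 0, the gradient in x of the d-dimensional Mehler kernel satisfies |∇_x G_κ^{(d)}(x,y;t,1)| ≤ C · √κ · √(coth(κt/2)) · G_κ^{(d)}(x,y;t,2), where |·| is the Euclidean norm of the gradient vector. -/

import Mathlib

open Real

/-- The generalized d-dimensional Mehler kernel on Euclidean space.
Here `cosh/sinh` plays the role of `coth`. -/
noncomputable def mehlerGE (d : ℕ) (κ t γ : ℝ) (x y : EuclideanSpace ℝ (Fin d)) : ℝ :=
  (κ / (2 * Real.pi * Real.sinh (κ * t))) ^ ((d : ℝ) / 2) *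
    ∏ j, Real.exp (-(κ / (4 * γ)) * ((x j + y j) ^ 2 * Real.tanh (κ * t / 2) +
      (x j - y j) ^ 2 * (Real.cosh (κ * t / 2) / Real.sinh (κ * t / 2))))

/-!
Write the kernel as `A · exp (-(κ / 4γ) Q(x))` with
`Q(x) = ∑ⱼ (xⱼ + yⱼ)² tanh(κt/2) + (xⱼ - yⱼ)² coth(κt/2)`. The `j`-th partial derivative of
`G(·; 1)` is `-(κ/2) ((xⱼ + yⱼ) tanh + (xⱼ - yⱼ) coth) · G(·; 1)`, and
`G(·; 1) = G(·; 2) · exp (-κQ/8)`. The spare Gaussian factor absorbs the linear factor: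
`a |s| α exp (-a s² α) ≤ √a √α` because `u exp (-u²) ≤ 1`, and `tanh ≤ coth`. Summing over the
coordinates gives the constant `8 d`, enlarged to `8 (d + 1)` so that it is positive for `d = 0`.
-/

namespace Real

theorem le_exp_sq (u : ℝ) : u ≤ exp (u ^ 2) := by
  nlinarith [add_one_le_exp (u ^ 2), sq_nonneg (u - 1)]

theorem mul_exp_neg_sq_le_one (u : ℝ) : u * exp (-u ^ 2) ≤ 1 := by
  calc u * exp (-u ^ 2) ≤ exp (u ^ 2) * exp (-u ^ 2) := by gcongr; exact le_exp_sq u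
    _ = 1 := by rw [← exp_add, add_neg_cancel, exp_zero]

theorem mul_abs_mul_exp_neg_le {a α : ℝ} (ha : 0 ≤ a) (hα : 0 ≤ α) (s : ℝ) :
    a * (|s| * α) * exp (-(a * (s ^ 2 * α))) ≤ √a * √α := by
  set u := |s| * √(a * α)
  have hsq : √(a * α) ^ 2 = a * α := sq_sqrt (mul_nonneg ha hα)
  have hlin : a * (|s| * α) = √(a * α) * u := by
    simp only [u]; linear_combination (-|s|) * hsq
  have hquad : a * (s ^ 2 * α) = u ^ 2 := by
    simp only [u]; rw [mul_pow, sq_abs, hsq]; ring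
  rw [hlin, hquad, mul_assoc, ← sqrt_mul ha]
  exact mul_le_of_le_one_right (sqrt_nonneg _) (mul_exp_neg_sq_le_one u)

theorem mul_abs_add_mul_exp_neg_le {a T K : ℝ} (ha : 0 ≤ a) (hT : 0 ≤ T) (hTK : T ≤ K) (s r : ℝ) :
    a * |s * T + r * K| * exp (-(a * (s ^ 2 * T + r ^ 2 * K))) ≤ 2 * √a * √K := by
  have hK : 0 ≤ K := hT.trans hTK
  have hr : exp (-(a * (r ^ 2 * K))) ≤ 1 := exp_le_one_iff.mpr <| neg_nonpos.mpr (by positivity)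
  have hs : exp (-(a * (s ^ 2 * T))) ≤ 1 := exp_le_one_iff.mpr <| neg_nonpos.mpr (by positivity)
  have hsplit : exp (-(a * (s ^ 2 * T + r ^ 2 * K))) =
      exp (-(a * (s ^ 2 * T))) * exp (-(a * (r ^ 2 * K))) := by
    rw [← exp_add]; ring_nf
  calc a * |s * T + r * K| * exp (-(a * (s ^ 2 * T + r ^ 2 * K)))
      ≤ a * (|s| * T + |r| * K) * exp (-(a * (s ^ 2 * T + r ^ 2 * K))) := by
        gcongr
        calc |s * T + r * K| ≤ |s * T| + |r * K| := abs_add_le _ _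
          _ = |s| * T + |r| * K := by rw [abs_mul, abs_mul, abs_of_nonneg hT, abs_of_nonneg hK]
    _ = a * (|s| * T) * exp (-(a * (s ^ 2 * T))) * exp (-(a * (r ^ 2 * K))) +
        a * (|r| * K) * exp (-(a * (r ^ 2 * K))) * exp (-(a * (s ^ 2 * T))) := by
        rw [hsplit]; ring
    _ ≤ √a * √T + √a * √K :=
        add_le_add
          ((mul_le_of_le_one_right (by positivity) hr).trans (mul_abs_mul_exp_neg_le ha hT s))
          ((mul_le_of_le_one_right (by positivity) hs).trans (mul_abs_mul_exp_neg_le ha hK r))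
    _ ≤ 2 * √a * √K := by
        have := sqrt_le_sqrt hTK
        nlinarith [sqrt_nonneg a]

theorem tanh_nonneg {z : ℝ} (hz : 0 ≤ z) : 0 ≤ tanh z := by
  rw [tanh_eq_sinh_div_cosh]; exact div_nonneg (sinh_nonneg_iff.mpr hz) (cosh_pos z).le

theorem tanh_le_cosh_div_sinh {z : ℝ} (hz : 0 < z) : tanh z ≤ cosh z / sinh z := by
  have hs := sinh_pos_iff.mpr hz
  rw [tanh_eq_sinh_div_cosh, div_le_div_iff₀ (cosh_pos z) hs]
  nlinarith [cosh_sq z]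

end Real

theorem EuclideanSpace.norm_proj_le {ι : Type*} [Fintype ι] (i : ι) :
    ‖(EuclideanSpace.proj i : EuclideanSpace ℝ ι →L[ℝ] ℝ)‖ ≤ 1 :=
  ContinuousLinearMap.opNorm_le_bound _ zero_le_one fun v => by
    simpa using PiLp.norm_apply_le v i

theorem EuclideanSpace.norm_sum_smul_proj_le {ι : Type*} [Fintype ι] (c : ι → ℝ) :
    ‖∑ i, c i • (EuclideanSpace.proj i : EuclideanSpace ℝ ι →L[ℝ] ℝ)‖ ≤ ∑ i, |c i| := by
  refine (norm_sum_le _ _).trans (Finset.sum_le_sum fun i _ => ?_)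
  rw [norm_smul, Real.norm_eq_abs]
  exact mul_le_of_le_one_right (abs_nonneg _) (norm_proj_le i)

section Mehler

variable {ι : Type*} [Fintype ι]

noncomputable def mehlerQuad (T K : ℝ) (x y : EuclideanSpace ℝ ι) : ℝ :=
  ∑ j, ((x j + y j) ^ 2 * T + (x j - y j) ^ 2 * K)

theorem hasFDerivAt_mehlerQuad (T K : ℝ) (x y : EuclideanSpace ℝ ι) :
    HasFDerivAt (fun x' => mehlerQuad T K x' y)
      (∑ j, (2 * ((x j + y j) * T + (x j - y j) * K)) • EuclideanSpace.proj (𝕜 := ℝ) j) x := by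
  refine HasFDerivAt.fun_sum fun j _ => ?_
  have hcoord : HasDerivAt (fun u => (u + y j) ^ 2 * T + (u - y j) ^ 2 * K)
      (2 * ((x j + y j) * T + (x j - y j) * K)) (x j) := by
    refine (((((hasDerivAt_id (x j)).add_const (y j)).pow 2).mul_const T).add
      ((((hasDerivAt_id (x j)).sub_const (y j)).pow 2).mul_const K)).congr_deriv ?_
    simp only [id, Nat.cast_ofNat]; ring
  exact hcoord.comp_hasFDerivAt x
    (EuclideanSpace.proj j : EuclideanSpace ℝ ι →L[ℝ] ℝ).hasFDerivAt

theorem mehlerQuad_term_le {T K : ℝ} (hT : 0 ≤ T) (hK : 0 ≤ K) (x y : EuclideanSpace ℝ ι)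
    (j : ι) :
    (x j + y j) ^ 2 * T + (x j - y j) ^ 2 * K ≤ mehlerQuad T K x y :=
  Finset.single_le_sum (f := fun j => (x j + y j) ^ 2 * T + (x j - y j) ^ 2 * K)
    (fun i _ => by positivity) (Finset.mem_univ j)

theorem norm_gradient_mul_exp_mehlerQuad_le {κ A T K : ℝ} (hκ : 0 < κ) (hA : 0 ≤ A) (hT : 0 ≤ T)
    (hTK : T ≤ K) (x y : EuclideanSpace ℝ ι) :
    ‖gradient (fun x' => A * exp (-(κ / 4) * mehlerQuad T K x' y)) x‖ ≤
      8 * Fintype.card ι * √κ * √K * (A * exp (-(κ / 8) * mehlerQuad T K x y)) := by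
  set Q := mehlerQuad T K x y
  set c : ι → ℝ := fun j => 2 * ((x j + y j) * T + (x j - y j) * K)
  have hderiv := (((hasFDerivAt_mehlerQuad T K x y).const_mul (-(κ / 4))).exp).const_mul A
  have hcoord : ∀ j, κ / 4 * |c j| * exp (-(κ / 8) * Q) ≤ 8 * √κ * √K := by
    intro j
    have hQ := mehlerQuad_term_le hT (hT.trans hTK) x y j
    calc κ / 4 * |c j| * exp (-(κ / 8) * Q)
        = 4 * (κ / 8 * |(x j + y j) * T + (x j - y j) * K| * exp (-(κ / 8) * Q)) := by
          simp only [c, abs_mul, abs_two]; ring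
      _ ≤ 4 * (κ / 8 * |(x j + y j) * T + (x j - y j) * K| *
            exp (-(κ / 8 * ((x j + y j) ^ 2 * T + (x j - y j) ^ 2 * K)))) := by
          gcongr 4 * (_ * exp ?_); nlinarith
      _ ≤ 4 * (2 * √(κ / 8) * √K) :=
          mul_le_mul_of_nonneg_left (mul_abs_add_mul_exp_neg_le (by positivity) hT hTK _ _)
            (by norm_num)
      _ ≤ 8 * √κ * √K := by
          have : √(κ / 8) ≤ √κ := sqrt_le_sqrt (by linarith)
          nlinarith [sqrt_nonneg K]
  have hsplit : exp (-(κ / 4) * Q) = exp (-(κ / 8) * Q) * exp (-(κ / 8) * Q) := by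
    rw [← exp_add]; ring_nf
  rw [gradient, LinearIsometryEquiv.norm_map, hderiv.fderiv]
  calc ‖A • exp (-(κ / 4) * Q) • (-(κ / 4)) • ∑ j, c j • EuclideanSpace.proj j‖
      ≤ A * exp (-(κ / 4) * Q) * (κ / 4) * ∑ j, |c j| := by
        rw [norm_smul, norm_smul, norm_smul, norm_neg, Real.norm_of_nonneg hA,
          Real.norm_of_nonneg (exp_pos _).le, Real.norm_of_nonneg (by positivity), ← mul_assoc,
          ← mul_assoc]
        gcongr
        exact EuclideanSpace.norm_sum_smul_proj_le c
    _ = A * exp (-(κ / 8) * Q) * ∑ j, κ / 4 * |c j| * exp (-(κ / 8) * Q) := by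
        rw [hsplit, Finset.mul_sum, Finset.mul_sum]
        exact Finset.sum_congr rfl fun j _ => by ring
    _ ≤ A * exp (-(κ / 8) * Q) * ∑ _j : ι, 8 * √κ * √K :=
        mul_le_mul_of_nonneg_left (Finset.sum_le_sum fun j _ => hcoord j) (by positivity)
    _ = 8 * Fintype.card ι * √κ * √K * (A * exp (-(κ / 8) * Q)) := by
        rw [Finset.sum_const, Finset.card_univ, nsmul_eq_mul]; ring

end Mehler

theorem mehlerGE_eq (d : ℕ) (κ t γ : ℝ) (x y : EuclideanSpace ℝ (Fin d)) :
    mehlerGE d κ t γ x y = (κ / (2 * π * sinh (κ * t))) ^ ((d : ℝ) / 2) *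
      exp (-(κ / (4 * γ)) *
        mehlerQuad (tanh (κ * t / 2)) (cosh (κ * t / 2) / sinh (κ * t / 2)) x y) := by
  rw [mehlerGE, mehlerQuad, Finset.mul_sum, exp_sum]

theorem mehler_gradient_bound_general (d : ℕ) :
    ∃ C > 0, ∀ κ > (0 : ℝ), ∀ x y : EuclideanSpace ℝ (Fin d), ∀ t > (0 : ℝ),
      ‖gradient (fun x' : EuclideanSpace ℝ (Fin d) => mehlerGE d κ t 1 x' y) x‖ ≤
        C * Real.sqrt κ *
          Real.sqrt (Real.cosh (κ * t / 2) / Real.sinh (κ * t / 2)) *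
            mehlerGE d κ t 2 x y := by
  refine ⟨8 * (d + 1), by positivity, fun κ hκ x y t ht => ?_⟩
  have hκt : 0 < κ * t / 2 := by positivity
  have hA : 0 ≤ (κ / (2 * π * sinh (κ * t))) ^ ((d : ℝ) / 2) :=
    rpow_nonneg (div_nonneg hκ.le (by have := sinh_pos_iff.mpr (mul_pos hκ ht); positivity)) _
  simp only [mehlerGE_eq, mul_one, show (4 : ℝ) * 2 = 8 by norm_num]
  refine (norm_gradient_mul_exp_mehlerQuad_le hκ hA (tanh_nonneg hκt.le)
    (tanh_le_cosh_div_sinh hκt) x y).trans ?_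
  rw [Fintype.card_fin]
  gcongr
  linarith

/-- Gradient estimate for the Mehler kernel. -/
theorem mehler_gradient_bound (d : ℕ) (hd : d = 1 ∨ d = 2 ∨ d = 3) :
    ∃ C > 0, ∀ κ > (0 : ℝ), ∀ x y : EuclideanSpace ℝ (Fin d), ∀ t > (0 : ℝ),
      ‖gradient (fun x' : EuclideanSpace ℝ (Fin d) => mehlerGE d κ t 1 x' y) x‖ ≤
        C * Real.sqrt κ *
          Real.sqrt (Real.cosh (κ * t / 2) / Real.sinh (κ * t / 2)) *
            mehlerGE d κ t 2 x y :=
  mehler_gradient_bound_general d
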